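/- Let γ be an antiproper edge coloring of the signed graph Σ = (Γ, σ). Then for every nonzero magnitude a, the spanning subgraph Σ_a consisting of the edges all of whose incidences are colored +a or −a is antibalanced (every circle contained in Σ_a has sign (−1)^{length}). Conversely, every antibalanced signed graph admits an antiproper edge coloring using only the two colors +a and −a. -/

import Mathlib

/-! An antiproper colouring gives all incidences of `Σ_a` at a vertex `v` one common
colour `ε(v)·a`, and the compatibility rule then reads `-σ(vw) = ε(v)ε(w)` on `Σ_a`; so `-σ`
telescopes to `1` around every closed walk of `Σ_a`. Conversely, if every circle of `Σ` has sign
`(-1)^length`, then `-σ` has product `1` around every closed walk, because bypassing a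
repeated vertex splits off a circle or a backtrack `u → w → u`. Hence products of `-σ` along
walks from a root in each component depend only on the endpoint, giving `θ : V → {±1}` with
`θ(w) = θ(v)·(-σ(vw))`, and `γ(v, e) = a·θ(v)` is an antiproper colouring. -/

open SimpleGraph

/-- An edge coloring of the signed graph `(G, σ)` with (arbitrary) signed colors:
an assignment of integers to the incidences of `G` such that
`γ(v,e) = -σ(e)·γ(w,e)` for each edge `e : vw`. -/
structure PColoring {V : Type*} (G : SimpleGraph V) (σ : Sym2 V → ℤ) where
  col : V → Sym2 V → ℤ
  compat : ∀ ⦃v w : V⦄, G.Adj v w → col v s(v, w) = -σ s(v, w) * col w s(v, w)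

/-- A coloring is antiproper if `γ(v,e) ≠ -γ(v,f)` for distinct edges `e, f` incident
to a common vertex `v`. -/
def PColoring.Antiproper {V : Type*} {G : SimpleGraph V} {σ : Sym2 V → ℤ}
    (c : PColoring G σ) : Prop :=
  ∀ ⦃v w x : V⦄, G.Adj v w → G.Adj v x → w ≠ x →
    c.col v s(v, w) ≠ -c.col v s(v, x)

/-- The magnitude graph `Σ_a`: the spanning subgraph of `G` consisting of the edges
all of whose incidences are colored `+a` or `-a`. -/
def magGraph {V : Type*} (G : SimpleGraph V) (col : V → Sym2 V → ℤ) (a : ℤ) :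
    SimpleGraph V where
  Adj v w := G.Adj v w ∧ (col v s(v, w) = a ∨ col v s(v, w) = -a) ∧
    (col w s(v, w) = a ∨ col w s(v, w) = -a)
  symm := ⟨by
    rintro v w ⟨h1, h2, h3⟩
    exact ⟨h1.symm, by rwa [Sym2.eq_swap], by rwa [Sym2.eq_swap]⟩⟩
  loopless := ⟨fun v h => G.loopless.irrefl v h.1⟩

namespace SimpleGraph

variable {V M : Type*} {G : SimpleGraph V}

namespace Walk

theorem mul_prod_map_edges_of_potential [Monoid M] (τ : Sym2 V → M) {f : V → M}
    (hf : ∀ ⦃v w : V⦄, G.Adj v w → f v * τ s(v, w) = f w) {u v : V} (p : G.Walk u v) :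
    f u * (p.edges.map τ).prod = f v := by
  induction p with
  | nil => simp
  | cons h p ih => rw [edges_cons, List.map_cons, List.prod_cons, ← mul_assoc, hf h, ih]

variable [CommMonoid M] {τ : Sym2 V → M}

theorem prod_map_edges_mul_self (hτ : ∀ e ∈ G.edgeSet, τ e * τ e = 1) {u v : V}
    (p : G.Walk u v) : (p.edges.map τ).prod * (p.edges.map τ).prod = 1 := by
  rw [← List.prod_map_mul]
  refine List.prod_eq_one fun x hx => ?_
  obtain ⟨e, he, rfl⟩ := List.mem_map.mp hx
  exact hτ e (p.edges_subset_edgeSet he)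

theorem prod_map_edges_eq_of_forall_closed (hτ : ∀ e ∈ G.edgeSet, τ e * τ e = 1)
    (hclosed : ∀ (v : V) (c : G.Walk v v), (c.edges.map τ).prod = 1) {u v : V}
    (p q : G.Walk u v) : (p.edges.map τ).prod = (q.edges.map τ).prod := by
  have hpq := hclosed u (p.append q.reverse)
  rw [edges_append, edges_reverse, List.map_append, List.map_reverse, List.prod_append,
    List.prod_reverse] at hpq
  calc (p.edges.map τ).prod
      = (p.edges.map τ).prod * ((q.edges.map τ).prod * (q.edges.map τ).prod) := by
        rw [q.prod_map_edges_mul_self hτ, mul_one]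
    _ = (q.edges.map τ).prod := by rw [← mul_assoc, hpq, one_mul]

theorem prod_map_edges_cons_of_isPath (hτ : ∀ e ∈ G.edgeSet, τ e * τ e = 1)
    (hcyc : ∀ (v : V) (c : G.Walk v v), c.IsCycle → (c.edges.map τ).prod = 1)
    {u w : V} (h : G.Adj u w) {q : G.Walk w u} (hq : q.IsPath) :
    ((cons h q).edges.map τ).prod = 1 := by
  by_cases he : s(u, w) ∈ q.edges
  · rw [hq.eq_adj_toWalk_of_mem_edges (Sym2.eq_swap ▸ he)]
    simpa [Sym2.eq_swap] using hτ _ h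
  · exact hcyc u _ ((cons_isCycle_iff q h).mpr ⟨hq, he⟩)

theorem prod_map_edges_bypass [DecidableEq V] (hτ : ∀ e ∈ G.edgeSet, τ e * τ e = 1)
    (hcyc : ∀ (v : V) (c : G.Walk v v), c.IsCycle → (c.edges.map τ).prod = 1)
    {u v : V} (p : G.Walk u v) : (p.bypass.edges.map τ).prod = (p.edges.map τ).prod := by
  induction p with
  | nil => rfl
  | @cons x y _ h p ih =>
    rw [bypass]
    split_ifs with hs
    · have hloop := prod_map_edges_cons_of_isPath hτ hcyc h (p.bypass_isPath.takeUntil hs)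
      calc ((p.bypass.dropUntil x hs).edges.map τ).prod
          = ((cons h (p.bypass.takeUntil x hs)).edges.map τ).prod *
              ((p.bypass.dropUntil x hs).edges.map τ).prod := by rw [hloop, one_mul]
        _ = τ s(x, y) * (((p.bypass.takeUntil x hs).append
              (p.bypass.dropUntil x hs)).edges.map τ).prod := by
          simp only [edges_cons, edges_append, List.map_cons, List.map_append, List.prod_cons,
            List.prod_append, mul_assoc]
        _ = ((cons h p).edges.map τ).prod := by simp [ih]
    · simp [ih]

theorem prod_map_edges_eq_one_of_forall_isCycle (hτ : ∀ e ∈ G.edgeSet, τ e * τ e = 1)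
    (hcyc : ∀ (v : V) (c : G.Walk v v), c.IsCycle → (c.edges.map τ).prod = 1)
    {v : V} (c : G.Walk v v) : (c.edges.map τ).prod = 1 := by
  classical
  rw [← prod_map_edges_bypass hτ hcyc, isPath_iff_nil.mp c.bypass_isPath |>.eq_nil]
  rfl

theorem prod_map_edges_eq_neg_one_pow_iff {σ : Sym2 V → ℤ} {u v : V} (p : G.Walk u v) :
    (p.edges.map σ).prod = (-1) ^ p.length ↔ (p.edges.map (-σ)).prod = 1 := by
  have hneg : (p.edges.map (-σ)).prod = (-1) ^ p.length * (p.edges.map σ).prod := by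
    rw [← p.length_edges, ← List.length_map (f := σ), ← List.prod_map_neg, List.map_map]
    rfl
  rw [hneg]
  rcases neg_one_pow_eq_or ℤ p.length with h | h <;> rw [h] <;> omega

end Walk

theorem exists_potential_of_forall_closed [CommMonoid M] {τ : Sym2 V → M}
    (hτ : ∀ e ∈ G.edgeSet, τ e * τ e = 1)
    (hclosed : ∀ (v : V) (c : G.Walk v v), (c.edges.map τ).prod = 1) :
    ∃ f : V → M, (∀ v, f v * f v = 1) ∧
      ∀ ⦃v w : V⦄, G.Adj v w → f v * τ s(v, w) = f w := by
  have hreach (v : V) : G.Reachable (G.connectedComponentMk v).out v :=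
    ConnectedComponent.exact (G.connectedComponentMk v).out_eq
  refine ⟨fun v => ((hreach v).some.edges.map τ).prod,
    fun v => (hreach v).some.prod_map_edges_mul_self hτ, fun v w h => ?_⟩
  have hroot : (G.connectedComponentMk v).out = (G.connectedComponentMk w).out :=
    congrArg Quot.out (ConnectedComponent.sound h.reachable)
  calc _ = ((((hreach v).some.concat h).copy hroot rfl).edges.map τ).prod := by
        simp [Walk.edges_concat]
    _ = _ := Walk.prod_map_edges_eq_of_forall_closed hτ hclosed _ _

end SimpleGraph

namespace PColoring

variable {V : Type*} {G : SimpleGraph V} {σ : Sym2 V → ℤ} {c : PColoring G σ} {a : ℤ}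

theorem Antiproper.col_eq_of_magGraph_adj (hc : c.Antiproper) {v w x : V}
    (hw : (magGraph G c.col a).Adj v w) (hx : (magGraph G c.col a).Adj v x) :
    c.col v s(v, w) = c.col v s(v, x) := by
  by_cases hwx : w = x
  · rw [hwx]
  have := hc hw.1 hx.1 hwx
  rcases hw.2.1 with hw' | hw' <;> rcases hx.2.1 with hx' | hx' <;> simp_all

open Classical in
/-- The colour `±a` shared by all incidences of `Σ_a` at `v`; `a` if `v` is isolated in `Σ_a`. -/
noncomputable def magColor (c : PColoring G σ) (a : ℤ) (v : V) : ℤ :=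
  if h : ∃ w, (magGraph G c.col a).Adj v w then c.col v s(v, h.choose) else a

theorem magColor_ne_zero (c : PColoring G σ) (ha : a ≠ 0) (v : V) : c.magColor a v ≠ 0 := by
  unfold magColor
  split_ifs with h
  · rcases h.choose_spec.2.1 with h' | h' <;> simp [h', ha]
  · exact ha

theorem Antiproper.magColor_eq (hc : c.Antiproper) {v w : V}
    (h : (magGraph G c.col a).Adj v w) :
    c.magColor a v = c.col v s(v, w) := by
  have hex : ∃ w, (magGraph G c.col a).Adj v w := ⟨w, h⟩
  rw [magColor, dif_pos hex, hc.col_eq_of_magGraph_adj hex.choose_spec h]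

theorem Antiproper.magColor_mul_neg (hσ : ∀ e ∈ G.edgeSet, σ e = 1 ∨ σ e = -1)
    (hc : c.Antiproper) {v w : V} (h : (magGraph G c.col a).Adj v w) :
    c.magColor a v * -σ s(v, w) = c.magColor a w := by
  rw [hc.magColor_eq h, hc.magColor_eq h.symm, Sym2.eq_swap (a := w), c.compat h.1]
  rcases hσ s(v, w) h.1 with hs | hs <;> simp [hs]

theorem Antiproper.prod_map_edges_magGraph (hσ : ∀ e ∈ G.edgeSet, σ e = 1 ∨ σ e = -1)
    (ha : a ≠ 0) (hc : c.Antiproper) {v : V} (W : (magGraph G c.col a).Walk v v) :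
    (W.edges.map σ).prod = (-1) ^ W.length := by
  rw [W.prod_map_edges_eq_neg_one_pow_iff]
  refine mul_left_cancel₀ (c.magColor_ne_zero ha v) ?_
  rw [mul_one]
  exact W.mul_prod_map_edges_of_potential (-σ) fun _ _ h => hc.magColor_mul_neg hσ h

end PColoring

theorem exists_antiproper_of_antibalanced {V : Type*} {G : SimpleGraph V} {σ : Sym2 V → ℤ}
    (hσ : ∀ e ∈ G.edgeSet, σ e = 1 ∨ σ e = -1) {a : ℤ} (ha : a ≠ 0)
    (hbal : ∀ (v : V) (W : G.Walk v v), W.IsCycle → (W.edges.map σ).prod = (-1) ^ W.length) :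
    ∃ c : PColoring G σ, (∀ ⦃v w : V⦄, G.Adj v w →
      c.col v s(v, w) = a ∨ c.col v s(v, w) = -a) ∧ c.Antiproper := by
  have hτ : ∀ e ∈ G.edgeSet, (-σ) e * (-σ) e = 1 := fun e he => by
    rcases hσ e he with hs | hs <;> simp [hs]
  have hclosed (v : V) (W : G.Walk v v) : (W.edges.map (-σ)).prod = 1 :=
    W.prod_map_edges_eq_one_of_forall_isCycle hτ fun u C hC =>
      C.prod_map_edges_eq_neg_one_pow_iff.mp (hbal u C hC)
  obtain ⟨θ, hθ, hθσ⟩ := exists_potential_of_forall_closed hτ hclosed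
  have hθ₁ (v : V) : θ v = 1 ∨ θ v = -1 := mul_self_eq_one_iff.mp (hθ v)
  refine ⟨⟨fun v _ => a * θ v, fun v w h => ?_⟩, fun v _ _ => ?_, fun v _ _ _ _ _ => ?_⟩
  · show a * θ v = -σ s(v, w) * (a * θ w)
    rw [← hθσ h]
    rcases hσ s(v, w) h with hs | hs <;> simp [hs]
  · rcases hθ₁ v with h | h <;> simp [h]
  · show a * θ v ≠ -(a * θ v)
    rcases hθ₁ v with h | h <;> simp only [h] <;> omega

theorem antiproper_magGraph_antibalanced_general {V : Type*} (G : SimpleGraph V)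
    (σ : Sym2 V → ℤ) (hσ : ∀ e ∈ G.edgeSet, σ e = 1 ∨ σ e = -1)
    (a : ℤ) (ha : a ≠ 0) :
    (∀ c : PColoring G σ, c.Antiproper →
      ∀ (v : V) (W : (magGraph G c.col a).Walk v v), W.IsCycle →
        (W.edges.map σ).prod = (-1) ^ W.length) ∧
    ((∀ (v : V) (W : G.Walk v v), W.IsCycle →
        (W.edges.map σ).prod = (-1) ^ W.length) →
      ∃ c : PColoring G σ,
        (∀ ⦃v w : V⦄, G.Adj v w →
          c.col v s(v, w) = a ∨ c.col v s(v, w) = -a) ∧ c.Antiproper) :=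
  ⟨fun _ hc _ W _ => hc.prod_map_edges_magGraph hσ ha W,
    exists_antiproper_of_antibalanced hσ ha⟩

/-- For an antiproper edge coloring `γ` of `Σ` and a nonzero magnitude `a`, the
magnitude graph `Σ_a` is antibalanced: every circle in it has sign `(-1)^length`.
Conversely, every antibalanced signed graph admits an antiproper edge coloring using
only the two colors `+a` and `-a`. -/
theorem antiproper_magGraph_antibalanced {V : Type*} [Fintype V] (G : SimpleGraph V)
    (σ : Sym2 V → ℤ) (hσ : ∀ e ∈ G.edgeSet, σ e = 1 ∨ σ e = -1)
    (a : ℤ) (ha : a ≠ 0) :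
    (∀ c : PColoring G σ, c.Antiproper →
      ∀ (v : V) (W : (magGraph G c.col a).Walk v v), W.IsCycle →
        (W.edges.map σ).prod = (-1) ^ W.length) ∧
    ((∀ (v : V) (W : G.Walk v v), W.IsCycle →
        (W.edges.map σ).prod = (-1) ^ W.length) →
      ∃ c : PColoring G σ,
        (∀ ⦃v w : V⦄, G.Adj v w →
          c.col v s(v, w) = a ∨ c.col v s(v, w) = -a) ∧ c.Antiproper) :=
  antiproper_magGraph_antibalanced_general G σ hσ a ha
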